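/- Let n ≥ 2 be a natural number and r > 0. Write points of ℝ^{n+1} as (x₁, x') with x₁ ∈ ℝ, x' ∈ ℝⁿ, and let C_r := {(x₁, x') : |x₁| ≤ r, |x'| ≤ r} be the closed solid cylinder. Let u : ([−r, r] \ {0}) × S^{n−1} → ℝ be a continuous function with 0 < u(x₁, ω) < r for all (x₁, ω), and suppose that sup_{ω ∈ S^{n−1}} u(x₁, ω)/|x₁| → 0 as x₁ → 0. Define the pinched cylindrical graph M := {(x₁, u(x₁, ω)·ω) : 0 < |x₁| ≤ r, ω ∈ S^{n−1}} ∪ {0} ⊂ ℝ^{n+1}. Then the two axis points p₋ := (−r/2, 0) and p₊ := (r/2, 0) belong to C_r \ M and lie in different connected components of C_r \ M. -/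

import Mathlib

open Set Filter Metric Topology

/-!
Let `L` be the set of points `(x₁, x')` of `C_r \ M` with `x₁ < 0` lying strictly inside the
graph, `‖x'‖ < u(x₁, x'/‖x'‖)` or `x' = 0`. Membership in `L` is locally constant on `C_r \ M`,
so `L` is a union of connected components; it contains `p₋` but not `p₊`. Local constancy:
off the axis and off `x₁ = 0` the sign of `u(x₁, x'/‖x'‖) - ‖x'‖` is locally constant because
it vanishes only on `M`; near an axis point with `x₁ < 0`, compactness of the sphere gives a
positive lower bound for `u`; near a point `(0, y)` with `y ≠ 0`, the pinching condition forces
`u(x₁, ·) < |x₁| < ‖x'‖`, so no point of `L` is close to it.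
-/

theorem notMem_connectedComponentIn_of_eventually_mem_iff {X : Type*} [TopologicalSpace X]
    {s A : Set X} {a b : X} (hA : ∀ p ∈ s, ∀ᶠ q in 𝓝[s] p, (q ∈ A ↔ p ∈ A)) (ha : a ∈ A)
    (hb : b ∉ A) : b ∉ connectedComponentIn s a := by
  classical
  intro hbC
  have hcont : ContinuousOn (fun q => decide (q ∈ A)) s := fun p hp => by
    rw [ContinuousWithinAt, nhds_discrete, tendsto_pure]
    filter_upwards [hA p hp] with q hq
    simp [hq]
  have haC : a ∈ connectedComponentIn s a :=
    mem_connectedComponentIn (connectedComponentIn_nonempty_iff.1 ⟨b, hbC⟩)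
  have := isPreconnected_connectedComponentIn.constant
    (hcont.mono (connectedComponentIn_subset s a)) haC hbC
  simp [ha, hb] at this

theorem ContinuousWithinAt.eventually_lt_iff {X α : Type*} [TopologicalSpace X] [LinearOrder α]
    [TopologicalSpace α] [OrderClosedTopology α] {f g : X → α} {s : Set X} {x : X}
    (hf : ContinuousWithinAt f s x) (hg : ContinuousWithinAt g s x) (hfg : f x ≠ g x) :
    ∀ᶠ y in 𝓝[s] x, (f y < g y ↔ f x < g x) := by
  rcases hfg.lt_or_gt with hlt | hgt
  · filter_upwards [Tendsto.eventually_lt hf hg hlt] with y hy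
    simp [hy, hlt]
  · filter_upwards [Tendsto.eventually_lt hg hf hgt] with y hy
    simp [hy.not_gt, hgt.not_gt]

section Neck

variable {E : Type*} [NormedAddCommGroup E] {r : ℝ} {u : ℝ → E → ℝ}

def solidCylinder (r : ℝ) : Set (ℝ × E) := {p | |p.1| ≤ r ∧ ‖p.2‖ ≤ r}

theorem fst_mem_Icc_of_mem_solidCylinder {p : ℝ × E} (hp : p ∈ solidCylinder r) :
    p.1 ∈ Icc (-r) r :=
  abs_le.1 hp.1

theorem eventually_lt_abs_of_tendsto_iSup_div [ProperSpace E] (hr : 0 < r)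
    (hcont : ContinuousOn (fun p : ℝ × E => u p.1 p.2) ((Icc (-r) r \ {0}) ×ˢ sphere (0 : E) 1))
    (hpinch : Tendsto (fun x₁ : ℝ => ⨆ ω : sphere (0 : E) 1, u x₁ ω / |x₁|) (𝓝[≠] 0) (𝓝 0)) :
    ∀ᶠ x₁ in 𝓝[≠] 0, ∀ ω ∈ sphere (0 : E) 1, u x₁ ω < |x₁| := by
  have hIcc : ∀ᶠ x₁ in 𝓝[≠] (0 : ℝ), x₁ ∈ Icc (-r) r :=
    nhdsWithin_le_nhds (Icc_mem_nhds (by linarith) hr)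
  filter_upwards [hpinch (Iio_mem_nhds one_pos), hIcc, self_mem_nhdsWithin]
    with x₁ hsup hx₁ hx₁0 ω hω
  have hcs : ContinuousOn (fun y => u x₁ y / |x₁|) (sphere (0 : E) 1) :=
    (hcont.comp (continuous_const.prodMk continuous_id).continuousOn
      fun y hy => ⟨⟨hx₁, hx₁0⟩, hy⟩).div_const _
  have hbdd : BddAbove (range fun ω : sphere (0 : E) 1 => u x₁ ω / |x₁|) :=
    ((isCompact_sphere 0 1).bddAbove_image hcs).mono (by rintro _ ⟨ω, rfl⟩; exact ⟨ω, ω.2, rfl⟩)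
  exact (div_lt_one (abs_pos.2 hx₁0)).1 ((le_ciSup hbdd ⟨ω, hω⟩).trans_lt hsup)

variable [NormedSpace ℝ E]

def pinchedGraph (r : ℝ) (u : ℝ → E → ℝ) : Set (ℝ × E) :=
  {p | ∃ x₁ ω, x₁ ∈ Icc (-r) r ∧ x₁ ≠ 0 ∧ ω ∈ sphere (0 : E) 1 ∧ p = (x₁, u x₁ ω • ω)}
    ∪ {((0 : ℝ), (0 : E))}

/-- The axis `p.2 = 0` is listed separately since `‖0‖⁻¹ • 0 = 0` is not a direction. -/
def leftNeckInterior (u : ℝ → E → ℝ) : Set (ℝ × E) :=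
  {p | p.1 < 0 ∧ (p.2 = 0 ∨ ‖p.2‖ < u p.1 (‖p.2‖⁻¹ • p.2))}

theorem mk_mem_pinchedGraph {x₁ : ℝ} {y : E} (hx₁ : x₁ ∈ Icc (-r) r) (hx₁0 : x₁ ≠ 0)
    (hy : y ≠ 0) (h : u x₁ (‖y‖⁻¹ • y) = ‖y‖) : (x₁, y) ∈ pinchedGraph r u := by
  refine Or.inl ⟨x₁, ‖y‖⁻¹ • y, hx₁, hx₁0, mem_sphere_zero_iff_norm.2 (norm_smul_inv_norm hy), ?_⟩
  rw [h, smul_inv_smul₀ (norm_ne_zero_iff.2 hy)]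

theorem mk_zero_notMem_pinchedGraph
    (hpos : ∀ x₁ ∈ Icc (-r) r \ {0}, ∀ ω ∈ sphere (0 : E) 1, 0 < u x₁ ω)
    {t : ℝ} (ht : t ≠ 0) : (t, (0 : E)) ∉ pinchedGraph r u := by
  rintro (⟨x₁, ω, hx₁, hx₁0, hω, h⟩ | h)
  · have h0 : u x₁ ω • ω = 0 := (congrArg Prod.snd h).symm
    rcases smul_eq_zero.1 h0 with hu | hω0
    · exact (hpos x₁ ⟨hx₁, hx₁0⟩ ω hω).ne' hu
    · exact ne_zero_of_mem_unit_sphere ⟨ω, hω⟩ hω0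
  · exact ht (congrArg Prod.fst h)

theorem continuousWithinAt_radial
    (hcont : ContinuousOn (fun p : ℝ × E => u p.1 p.2) ((Icc (-r) r \ {0}) ×ˢ sphere (0 : E) 1))
    {p : ℝ × E} (hp : p ∈ (Icc (-r) r \ {0}) ×ˢ ({0}ᶜ : Set E)) :
    ContinuousWithinAt (fun q : ℝ × E => u q.1 (‖q.2‖⁻¹ • q.2))
      ((Icc (-r) r \ {0}) ×ˢ ({0}ᶜ : Set E)) p := by
  have hdir : ContinuousOn (fun q : ℝ × E => (q.1, ‖q.2‖⁻¹ • q.2))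
      ((Icc (-r) r \ {0}) ×ˢ ({0}ᶜ : Set E)) :=
    continuous_fst.continuousOn.prodMk
      ((continuous_snd.norm.continuousOn.inv₀ fun q hq => norm_ne_zero_iff.2 hq.2).smul
        continuous_snd.continuousOn)
  exact (hcont.comp hdir fun q hq =>
    ⟨hq.1, mem_sphere_zero_iff_norm.2 (norm_smul_inv_norm hq.2)⟩) p hp

theorem eventually_notMem_leftNeckInterior_of_fst_pos {p : ℝ × E} (hp : 0 < p.1) :
    ∀ᶠ q in 𝓝 p, q ∉ leftNeckInterior u := by
  filter_upwards [(continuous_fst.tendsto p).eventually (lt_mem_nhds hp)] with q hq hqL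
  exact hqL.1.not_gt hq

theorem eventually_mem_leftNeckInterior_iff_of_snd_ne_zero
    (hcont : ContinuousOn (fun p : ℝ × E => u p.1 p.2) ((Icc (-r) r \ {0}) ×ˢ sphere (0 : E) 1))
    {p : ℝ × E} (hp : p ∈ solidCylinder r \ pinchedGraph r u) (hp1 : p.1 < 0) (hp2 : p.2 ≠ 0) :
    ∀ᶠ q in 𝓝[solidCylinder r] p, (q ∈ leftNeckInterior u ↔ p ∈ leftNeckInterior u) := by
  set S : Set (ℝ × E) := (Icc (-r) r \ {0}) ×ˢ ({0}ᶜ : Set E)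
  have hpS : p ∈ S := ⟨⟨fst_mem_Icc_of_mem_solidCylinder hp.1, hp1.ne⟩, hp2⟩
  have hgap : ∀ᶠ q in 𝓝[S] p,
      (‖q.2‖ < u q.1 (‖q.2‖⁻¹ • q.2) ↔ ‖p.2‖ < u p.1 (‖p.2‖⁻¹ • p.2)) :=
    continuous_snd.norm.continuousWithinAt.eventually_lt_iff (continuousWithinAt_radial hcont hpS)
      fun h => hp.2 (mk_mem_pinchedGraph hpS.1.1 hp1.ne hp2 h.symm)
  have hleft : ∀ᶠ q in 𝓝 p, q.1 < 0 := (continuous_fst.tendsto p).eventually (gt_mem_nhds hp1)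
  have hoff : ∀ᶠ q in 𝓝 p, q.2 ≠ 0 := (continuous_snd.tendsto p).eventually_ne hp2
  filter_upwards [nhdsWithin_le_nhds (eventually_nhdsWithin_iff.1 hgap), nhdsWithin_le_nhds hleft,
    nhdsWithin_le_nhds hoff, self_mem_nhdsWithin] with q hgap hleft hoff hq
  simp only [leftNeckInterior, mem_ofPred_eq, hleft, hp1, hoff, hp2, false_or, true_and]
  exact hgap ⟨⟨fst_mem_Icc_of_mem_solidCylinder hq, hleft.ne⟩, hoff⟩

variable [ProperSpace E]

theorem eventually_notMem_leftNeckInterior_of_fst_eq_zero (hr : 0 < r)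
    (hcont : ContinuousOn (fun p : ℝ × E => u p.1 p.2) ((Icc (-r) r \ {0}) ×ˢ sphere (0 : E) 1))
    (hpinch : Tendsto (fun x₁ : ℝ => ⨆ ω : sphere (0 : E) 1, u x₁ ω / |x₁|) (𝓝[≠] 0) (𝓝 0))
    {y : E} (hy : y ≠ 0) : ∀ᶠ q in 𝓝 ((0 : ℝ), y), q ∉ leftNeckInterior u := by
  have hsmall : ∀ᶠ q in 𝓝 ((0 : ℝ), y), q.1 ≠ 0 → ∀ ω ∈ sphere (0 : E) 1, u q.1 ω < |q.1| :=
    (continuous_fst.tendsto ((0 : ℝ), y)).eventually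
      (eventually_nhdsWithin_iff.1 (eventually_lt_abs_of_tendsto_iSup_div hr hcont hpinch))
  have hwide : ∀ᶠ q in 𝓝 ((0 : ℝ), y), |q.1| < ‖q.2‖ :=
    continuous_fst.abs.continuousAt.eventually_lt continuous_snd.norm.continuousAt
      (by simpa using hy)
  filter_upwards [hsmall, hwide] with q hsmall hwide ⟨hq1, hq2⟩
  rcases hq2 with hq2 | hq2
  · simp only [hq2, norm_zero] at hwide
    exact (abs_nonneg _).not_gt hwide
  · have hq2' : q.2 ≠ 0 := norm_pos_iff.1 ((abs_nonneg _).trans_lt hwide)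
    have hdir : ‖q.2‖⁻¹ • q.2 ∈ sphere (0 : E) 1 :=
      mem_sphere_zero_iff_norm.2 (norm_smul_inv_norm hq2')
    linarith [hsmall hq1.ne _ hdir]

theorem eventually_mem_leftNeckInterior_of_snd_eq_zero
    (hcont : ContinuousOn (fun p : ℝ × E => u p.1 p.2) ((Icc (-r) r \ {0}) ×ˢ sphere (0 : E) 1))
    (hpos : ∀ x₁ ∈ Icc (-r) r \ {0}, ∀ ω ∈ sphere (0 : E) 1, 0 < u x₁ ω)
    {a : ℝ} (ha : a < 0) : ∀ᶠ q in 𝓝[solidCylinder r] (a, (0 : E)), q ∈ leftNeckInterior u := by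
  have hK : Icc (-r) (a / 2) ×ˢ sphere (0 : E) 1 ⊆ (Icc (-r) r \ {0}) ×ˢ sphere (0 : E) 1 :=
    fun q ⟨⟨hq1, hq2⟩, hω⟩ =>
      have hq : q.1 < 0 := hq2.trans_lt (by linarith)
      ⟨⟨⟨hq1, by linarith⟩, hq.ne⟩, hω⟩
  obtain ⟨m, hm, hmu⟩ := (isCompact_Icc.prod (isCompact_sphere (0 : E) 1)).exists_forall_le'
    (hcont.mono hK) fun q hq => hpos q.1 (hK hq).1 q.2 (hK hq).2
  have hleft : ∀ᶠ q in 𝓝 (a, (0 : E)), q.1 < a / 2 :=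
    (continuous_fst.tendsto _).eventually (gt_mem_nhds (by linarith))
  have hthin : ∀ᶠ q in 𝓝 (a, (0 : E)), ‖q.2‖ < m :=
    (continuous_snd.norm.tendsto _).eventually (gt_mem_nhds (by simpa using hm))
  filter_upwards [nhdsWithin_le_nhds hleft, nhdsWithin_le_nhds hthin, self_mem_nhdsWithin]
    with q hleft hthin hq
  refine ⟨by linarith, or_iff_not_imp_left.2 fun hq2 =>
    hthin.trans_le (hmu (q.1, ‖q.2‖⁻¹ • q.2) ?_)⟩
  exact ⟨⟨(fst_mem_Icc_of_mem_solidCylinder hq).1, hleft.le⟩,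
    mem_sphere_zero_iff_norm.2 (norm_smul_inv_norm hq2)⟩

theorem eventually_mem_leftNeckInterior_iff (hr : 0 < r)
    (hcont : ContinuousOn (fun p : ℝ × E => u p.1 p.2) ((Icc (-r) r \ {0}) ×ˢ sphere (0 : E) 1))
    (hpos : ∀ x₁ ∈ Icc (-r) r \ {0}, ∀ ω ∈ sphere (0 : E) 1, 0 < u x₁ ω)
    (hpinch : Tendsto (fun x₁ : ℝ => ⨆ ω : sphere (0 : E) 1, u x₁ ω / |x₁|) (𝓝[≠] 0) (𝓝 0))
    {p : ℝ × E} (hp : p ∈ solidCylinder r \ pinchedGraph r u) :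
    ∀ᶠ q in 𝓝[solidCylinder r \ pinchedGraph r u] p,
      (q ∈ leftNeckInterior u ↔ p ∈ leftNeckInterior u) := by
  have hCr : 𝓝[solidCylinder r \ pinchedGraph r u] p ≤ 𝓝[solidCylinder r] p :=
    nhdsWithin_mono _ sdiff_subset
  obtain ⟨x₁, y⟩ := p
  rcases lt_trichotomy x₁ 0 with hx₁ | rfl | hx₁
  · by_cases hy : y = 0
    · subst hy
      filter_upwards [hCr (eventually_mem_leftNeckInterior_of_snd_eq_zero hcont hpos hx₁)]
        with q hq using iff_of_true hq ⟨hx₁, Or.inl rfl⟩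
    · exact hCr (eventually_mem_leftNeckInterior_iff_of_snd_ne_zero hcont hp hx₁ hy)
  · have hy : y ≠ 0 := by
      rintro rfl
      exact hp.2 (Or.inr rfl)
    filter_upwards [nhdsWithin_le_nhds
      (eventually_notMem_leftNeckInterior_of_fst_eq_zero hr hcont hpinch hy)]
      with q hq using iff_of_false hq fun h => h.1.ne rfl
  · filter_upwards [nhdsWithin_le_nhds (eventually_notMem_leftNeckInterior_of_fst_pos hx₁)]
      with q hq using iff_of_false hq fun h => h.1.not_gt hx₁

end Neck

theorem neck_locally_disconnects_general
    (n : ℕ) (r : ℝ) (hr : 0 < r)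
    (u : ℝ → EuclideanSpace ℝ (Fin n) → ℝ)
    (hcont : ContinuousOn (fun p : ℝ × EuclideanSpace ℝ (Fin n) => u p.1 p.2)
      ((Icc (-r) r \ {0}) ×ˢ sphere (0 : EuclideanSpace ℝ (Fin n)) 1))
    (hbound : ∀ x₁ ∈ Icc (-r) r \ {0},
      ∀ ω ∈ sphere (0 : EuclideanSpace ℝ (Fin n)) 1, 0 < u x₁ ω ∧ u x₁ ω < r)
    (hpinch : Tendsto
      (fun x₁ : ℝ => ⨆ ω : sphere (0 : EuclideanSpace ℝ (Fin n)) 1, u x₁ (ω : _) / |x₁|)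
      (nhdsWithin 0 ({0}ᶜ)) (nhds 0)) :
    -- `C_r` is the closed solid cylinder, `M` the pinched cylindrical graph
    ∀ Cr M : Set (ℝ × EuclideanSpace ℝ (Fin n)),
      Cr = {p | |p.1| ≤ r ∧ ‖p.2‖ ≤ r} →
      M = {p | ∃ x₁ ω, x₁ ∈ Icc (-r) r ∧ x₁ ≠ 0 ∧
              ω ∈ sphere (0 : EuclideanSpace ℝ (Fin n)) 1 ∧ p = (x₁, u x₁ ω • ω)}
            ∪ {((0 : ℝ), (0 : EuclideanSpace ℝ (Fin n)))} →
      ((-r / 2, (0 : EuclideanSpace ℝ (Fin n))) ∈ Cr \ M ∧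
       (r / 2, (0 : EuclideanSpace ℝ (Fin n))) ∈ Cr \ M ∧
       (r / 2, (0 : EuclideanSpace ℝ (Fin n))) ∉
         connectedComponentIn (Cr \ M) (-r / 2, (0 : EuclideanSpace ℝ (Fin n)))) := by
  rintro Cr M rfl rfl
  have hpos : ∀ x₁ ∈ Icc (-r) r \ {0}, ∀ ω ∈ sphere (0 : EuclideanSpace ℝ (Fin n)) 1,
      0 < u x₁ ω := fun x₁ hx₁ ω hω => (hbound x₁ hx₁ ω hω).1
  have haxis : ∀ t : ℝ, t ≠ 0 → |t| ≤ r →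
      (t, (0 : EuclideanSpace ℝ (Fin n))) ∈ solidCylinder r \ pinchedGraph r u :=
    fun t ht htr => ⟨⟨htr, by simpa using hr.le⟩, mk_zero_notMem_pinchedGraph hpos ht⟩
  have hr2 : |r / 2| ≤ r := by rw [abs_of_pos (half_pos hr)]; linarith
  refine ⟨haxis _ (by linarith) (by rwa [neg_div, abs_neg]), haxis _ (by linarith) hr2, ?_⟩
  exact notMem_connectedComponentIn_of_eventually_mem_iff
    (fun p hp => eventually_mem_leftNeckInterior_iff hr hcont hpos hpinch hp)
    ⟨by linarith, Or.inl rfl⟩ fun h => h.1.not_gt (half_pos hr)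

/-- A pinched cylindrical graph `M` over the `x₁`-axis inside the solid
cylinder `C_r ⊂ ℝ^{n+1} = ℝ × ℝⁿ`, given by a continuous height function
`u : ([−r,r] \ {0}) × S^{n−1} → (0, r)` with `sup_ω u(x₁,ω)/|x₁| → 0` as `x₁ → 0`,
together with the pinch point `0`, locally disconnects `C_r`: the two axis points
`p₋ = (−r/2, 0)` and `p₊ = (r/2, 0)` lie in `C_r \ M` and belong to different connected
components of `C_r \ M`. -/
theorem neck_locally_disconnects
    (n : ℕ) (hn : 2 ≤ n) (r : ℝ) (hr : 0 < r)
    (u : ℝ → EuclideanSpace ℝ (Fin n) → ℝ)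
    (hcont : ContinuousOn (fun p : ℝ × EuclideanSpace ℝ (Fin n) => u p.1 p.2)
      ((Icc (-r) r \ {0}) ×ˢ sphere (0 : EuclideanSpace ℝ (Fin n)) 1))
    (hbound : ∀ x₁ ∈ Icc (-r) r \ {0},
      ∀ ω ∈ sphere (0 : EuclideanSpace ℝ (Fin n)) 1, 0 < u x₁ ω ∧ u x₁ ω < r)
    (hpinch : Tendsto
      (fun x₁ : ℝ => ⨆ ω : sphere (0 : EuclideanSpace ℝ (Fin n)) 1, u x₁ (ω : _) / |x₁|)
      (nhdsWithin 0 ({0}ᶜ)) (nhds 0)) :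
    -- `C_r` is the closed solid cylinder, `M` the pinched cylindrical graph
    ∀ Cr M : Set (ℝ × EuclideanSpace ℝ (Fin n)),
      Cr = {p | |p.1| ≤ r ∧ ‖p.2‖ ≤ r} →
      M = {p | ∃ x₁ ω, x₁ ∈ Icc (-r) r ∧ x₁ ≠ 0 ∧
              ω ∈ sphere (0 : EuclideanSpace ℝ (Fin n)) 1 ∧ p = (x₁, u x₁ ω • ω)}
            ∪ {((0 : ℝ), (0 : EuclideanSpace ℝ (Fin n)))} →
      ((-r / 2, (0 : EuclideanSpace ℝ (Fin n))) ∈ Cr \ M ∧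
       (r / 2, (0 : EuclideanSpace ℝ (Fin n))) ∈ Cr \ M ∧
       (r / 2, (0 : EuclideanSpace ℝ (Fin n))) ∉
         connectedComponentIn (Cr \ M) (-r / 2, (0 : EuclideanSpace ℝ (Fin n)))) :=
  neck_locally_disconnects_general n r hr u hcont hbound hpinch
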